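/- Let (Q, Σ, π) be a measure space, let H be a separable real Hilbert space, let A : Q → L(H, H) satisfy q ↦ A(q)x measurable for every x and ‖A(q)‖ ≤ M π-a.e., and let 𝒜 be a bounded operator on ℋ = L²_π(Q; H) with (𝒜v)(q) = A(q)(v(q)) π-a.e. for every v ∈ ℋ. Let C : Q → L(H, ℝ) satisfy q ↦ C(q)x measurable for every x ∈ H and ‖C(q)‖ ≤ K π-a.e. Then for every v ∈ ℋ and every t ∈ ℝ, the population output equals the expected individual output: ∫_Q C(q)((exp(t𝒜)v)(q)) dπ(q) = ∫_Q C(q)(exp(t·A(q))(v(q))) dπ(q), i.e., the averaged output functional applied to the averaged-system state equals E_π of the pointwise outputs C(q)exp(tA(q))v(q). -/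

import Mathlib

/-! The partial sums of the exponential series of `t • 𝒜` act pointwise as those of `t • A q`.
They converge in operator norm, so applied to `v` they converge in `L²`, hence a.e. along a
subsequence, while the partial sums for `t • A q` converge at every `q`. Thus
`exp (t • 𝒜) v = exp (t • A q) (v q)` a.e., and the two integrands agree a.e. -/

open MeasureTheory Filter Topology

noncomputable instance topRingCLMLp {Q : Type*} [MeasurableSpace Q] {π : Measure Q}
    {H : Type*} [NormedAddCommGroup H] [InnerProductSpace ℝ H] :
    IsTopologicalRing (Lp H 2 π →L[ℝ] Lp H 2 π) := by
  exact @NonUnitalSeminormedRing.toIsTopologicalRing (Lp H 2 π →L[ℝ] Lp H 2 π) _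

namespace MeasureTheory.Lp

variable {Q : Type*} [MeasurableSpace Q] {μ : Measure Q} {p : ENNReal} [Fact (1 ≤ p)]
  {𝕜 : Type*} [RCLike 𝕜] {E : Type*} [NormedAddCommGroup E] [NormedSpace 𝕜 E]

def ActsPointwise (T : Lp E p μ →L[𝕜] Lp E p μ) (A : Q → E →L[𝕜] E) : Prop :=
  ∀ v : Lp E p μ, T v =ᵐ[μ] fun q => A q (v q)

namespace ActsPointwise

variable {T S : Lp E p μ →L[𝕜] Lp E p μ} {A B : Q → E →L[𝕜] E}

theorem one : ActsPointwise (1 : Lp E p μ →L[𝕜] Lp E p μ) (fun _ : Q => (1 : E →L[𝕜] E)) :=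
  fun _ => .rfl

theorem mul (hT : ActsPointwise T A) (hS : ActsPointwise S B) :
    ActsPointwise (T * S) (fun q => A q * B q) := fun v => by
  filter_upwards [hT (S v), hS v] with q hTq hSq
  rw [mul_apply_eq_comp, hTq, hSq, mul_apply_eq_comp]

theorem pow (hT : ActsPointwise T A) (n : ℕ) : ActsPointwise (T ^ n) (fun q => A q ^ n) := by
  induction n with
  | zero => simpa only [pow_zero] using one
  | succ n ih => simpa only [pow_succ] using ih.mul hT

theorem smul (hT : ActsPointwise T A) (c : 𝕜) : ActsPointwise (c • T) (fun q => c • A q) :=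
  fun v => by
    filter_upwards [Lp.coeFn_smul c (T v), hT v] with q hcq hq
    rw [smul_apply, hcq, Pi.smul_apply, hq, smul_apply]

theorem add (hT : ActsPointwise T A) (hS : ActsPointwise S B) :
    ActsPointwise (T + S) (fun q => A q + B q) := fun v => by
  filter_upwards [Lp.coeFn_add (T v) (S v), hT v, hS v] with q hq hTq hSq
  rw [add_apply, hq, Pi.add_apply, hTq, hSq, add_apply]

theorem zero : ActsPointwise (0 : Lp E p μ →L[𝕜] Lp E p μ) (fun _ : Q => (0 : E →L[𝕜] E)) :=
  fun _ => Lp.coeFn_zero E p μ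

theorem sum {ι : Type*} {Ts : ι → Lp E p μ →L[𝕜] Lp E p μ} {As : ι → Q → E →L[𝕜] E}
    (s : Finset ι) (h : ∀ i ∈ s, ActsPointwise (Ts i) (As i)) :
    ActsPointwise (∑ i ∈ s, Ts i) (fun q => ∑ i ∈ s, As i q) := by
  classical
  induction s using Finset.induction_on with
  | empty => simpa only [Finset.sum_empty] using zero
  | insert i s hi ih =>
    simp only [Finset.sum_insert hi]
    exact (h i (s.mem_insert_self i)).add (ih fun j hj => h j (Finset.mem_insert_of_mem hj))

theorem of_tendsto {Ts : ℕ → Lp E p μ →L[𝕜] Lp E p μ} {As : ℕ → Q → E →L[𝕜] E}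
    (h : ∀ n, ActsPointwise (Ts n) (As n)) (hT : Tendsto Ts atTop (𝓝 T))
    (hA : ∀ q, Tendsto (fun n => As n q) atTop (𝓝 (A q))) : ActsPointwise T A := fun v => by
  have hTv : Tendsto (fun n => Ts n v) atTop (𝓝 (T v)) :=
    ((ContinuousLinearMap.apply 𝕜 _ v).continuous.tendsto T).comp hT
  obtain ⟨ns, hns, hae⟩ := (tendstoInMeasure_of_tendsto_Lp hTv).exists_seq_tendsto_ae
  filter_upwards [hae, ae_all_iff.2 fun n => h (ns n) v] with q hlim hn
  refine tendsto_nhds_unique hlim ?_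
  simp only [hn]
  exact ((ContinuousLinearMap.apply 𝕜 E (v q)).continuous.tendsto (A q)).comp
    ((hA q).comp hns.tendsto_atTop)

theorem exp [CompleteSpace E] (hT : ActsPointwise T A) :
    ActsPointwise (NormedSpace.exp T) (fun q => NormedSpace.exp (A q)) := by
  refine of_tendsto (fun N => sum (Finset.range N) fun n _ => (hT.pow n).smul _)
    (NormedSpace.exp_series_hasSum_exp' (𝕂 := 𝕜) T).tendsto_sum_nat fun q => ?_
  exact (NormedSpace.exp_series_hasSum_exp' (𝕂 := 𝕜) (A q)).tendsto_sum_nat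

end ActsPointwise

end MeasureTheory.Lp

open MeasureTheory.Lp in
theorem population_output_eq_expected_individual_output_general
    {Q : Type*} [MeasurableSpace Q] (π : Measure Q)
    {H : Type*} [NormedAddCommGroup H] [InnerProductSpace ℝ H] [CompleteSpace H]
    (A : Q → H →L[ℝ] H)
    (𝒜 : Lp H 2 π →L[ℝ] Lp H 2 π)
    (h𝒜 : ∀ v : Lp H 2 π, (𝒜 v : Q → H) =ᵐ[π] fun q => A q (v q))
    (C : Q → H →L[ℝ] ℝ) :
    ∀ (v : Lp H 2 π) (t : ℝ),
      ∫ q, C q (NormedSpace.exp (t • 𝒜) v q) ∂π =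
        ∫ q, C q (NormedSpace.exp (t • A q) (v q)) ∂π := fun v t =>
  integral_congr_ae <| by
    filter_upwards [(ActsPointwise.smul h𝒜 t).exp v] with q hq
    rw [hq]

/-- The population output equals the expected individual output (identity (3.7) of the paper,
bounded-operator version): if `𝒜` acts pointwise on `ℋ = L²_π(Q; H)` as the π-a.e. uniformly
bounded measurable family `A(q)`, and `C(q)` is a π-a.e. uniformly bounded measurable family
of output functionals, then
`∫ C(q)((exp(t𝒜)v)(q)) dπ = ∫ C(q)(exp(t·A(q))(v(q))) dπ`. -/
theorem population_output_eq_expected_individual_output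
    {Q : Type*} [MeasurableSpace Q] (π : Measure Q)
    {H : Type*} [NormedAddCommGroup H] [InnerProductSpace ℝ H] [CompleteSpace H]
    [TopologicalSpace.SeparableSpace H] [MeasurableSpace H] [BorelSpace H]
    (M : ℝ)
    (A : Q → H →L[ℝ] H)
    (hAmeas : ∀ x : H, Measurable fun q => A q x)
    (hAbdd : ∀ᵐ q ∂π, ‖A q‖ ≤ M)
    (𝒜 : Lp H 2 π →L[ℝ] Lp H 2 π)
    (h𝒜 : ∀ v : Lp H 2 π, (𝒜 v : Q → H) =ᵐ[π] fun q => A q (v q))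
    (K : ℝ)
    (C : Q → H →L[ℝ] ℝ)
    (hCmeas : ∀ x : H, Measurable fun q => C q x)
    (hCbdd : ∀ᵐ q ∂π, ‖C q‖ ≤ K) :
    ∀ (v : Lp H 2 π) (t : ℝ),
      ∫ q, C q (NormedSpace.exp (t • 𝒜) v q) ∂π =
        ∫ q, C q (NormedSpace.exp (t • A q) (v q)) ∂π :=
  population_output_eq_expected_individual_output_general π A 𝒜 h𝒜 C
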